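/- Fix α > 0, μ > 0, β > 0, O₁ = (−β,0,…,0) and O₂ = (β,0,…,0). For H ∈ {2,3}, let λ_{H,∞} denote the infimum over φ ∈ E with ∫φ² = 1 of (μ²/2)∫‖∇φ‖² − ∫ R_H φ², where R₂ = (r₁+r₂)/2 and R₃ = (r₁+r₂+r₃)/3, with r₃ the fitness associated to a third optimum O₃ ∈ ℝⁿ. Then the region Λ_∞ := { O₃ ∈ ℝⁿ : λ_{3,∞}(α,μ,O₁,O₂,O₃) < λ_{2,∞}(α,μ,O₁,O₂) } is exactly the open Euclidean ball B(𝒪, √(3/2)·β) centered at the origin 𝒪 = (0,…,0) of radius √(3/2)·β; i.e., λ_{3,∞}(α,μ,O₁,O₂,O₃) < λ_{2,∞}(α,μ,O₁,O₂) if and only if ‖O₃‖ < √(3/2)·β. -/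

import Mathlib

open MeasureTheory Real Filter Topology

noncomputable section

namespace MigrationAdaptation

abbrev Rn (n : ℕ) := EuclideanSpace ℝ (Fin n)

/-- Quadratic (Fisher geometric model) fitness with optimum `O`. -/
def fitness {n : ℕ} (rmax α : ℝ) (O : Rn n) (x : Rn n) : ℝ :=
  rmax - α / 2 * ‖x - O‖ ^ 2

/-- The admissible class `E = H¹(ℝⁿ) ∩ L²_w(ℝⁿ)`. -/
def memE {n : ℕ} (ψ : Rn n → ℝ) : Prop :=
  Integrable (fun x => (ψ x) ^ 2) ∧
  Integrable (fun x => ‖gradient ψ x‖ ^ 2) ∧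
  Integrable (fun x => ‖x‖ ^ 2 * (ψ x) ^ 2)

/-- Rayleigh quotient `Q_H`. -/
def QH {n H : ℕ} (δ μ : ℝ) (r : Fin H → Rn n → ℝ) (Ψ : Fin H → Rn n → ℝ) : ℝ :=
  (∑ i, (μ ^ 2 / 2 * (∫ x, ‖gradient (Ψ i) x‖ ^ 2) - ∫ x, r i x * (Ψ i x) ^ 2)) +
    δ * (1 - ∑ i : Fin H, ∑ j : Fin H,
      if i < j then (2 / ((H : ℝ) - 1)) * ∫ x, Ψ i x * Ψ j x else 0)

/-- Principal eigenvalue `λ_H`, via the Rayleigh formula. -/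
def lambdaH {n : ℕ} (H : ℕ) (δ α μ rmax : ℝ) (O : Fin H → Rn n) : ℝ :=
  sInf {Q : ℝ | ∃ Ψ : Fin H → Rn n → ℝ, (∀ i, memE (Ψ i)) ∧
    (∑ i, ∫ x, (Ψ i x) ^ 2) = 1 ∧ Q = QH δ μ (fun i => fitness rmax α (O i)) Ψ}

/-- `λ₁(α,μ) = μ n √α / 2 - r_max`. -/
def lambda1 (n : ℕ) (α μ rmax : ℝ) : ℝ := μ * n * Real.sqrt α / 2 - rmax

/-- Single-host Rayleigh quotient. -/
def Q1 {n : ℕ} (μ : ℝ) (r : Rn n → ℝ) (ψ : Rn n → ℝ) : ℝ :=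
  μ ^ 2 / 2 * (∫ x, ‖gradient ψ x‖ ^ 2) - ∫ x, r x * (ψ x) ^ 2

/-- Principal eigenvalue for a single host with fitness `r`. -/
def lambdaSingle {n : ℕ} (μ : ℝ) (r : Rn n → ℝ) : ℝ :=
  sInf {Q : ℝ | ∃ ψ : Rn n → ℝ, memE ψ ∧ (∫ x, (ψ x) ^ 2) = 1 ∧ Q = Q1 μ r ψ}

/-- Two-host principal eigenvalue with migration loss `λ̃₂`. -/
def lambda2tilde {n : ℕ} (δ α μ rmax : ℝ) (O1 O2 : Rn n) : ℝ :=
  sInf {Q : ℝ | ∃ ψ1 ψ2 : Rn n → ℝ, memE ψ1 ∧ memE ψ2 ∧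
    (∫ x, (ψ1 x) ^ 2) + (∫ x, (ψ2 x) ^ 2) = 1 ∧
    Q = (μ ^ 2 / 2 * (∫ x, ‖gradient ψ1 x‖ ^ 2) - ∫ x, fitness rmax α O1 x * (ψ1 x) ^ 2) +
        (μ ^ 2 / 2 * (∫ x, ‖gradient ψ2 x‖ ^ 2) - ∫ x, fitness rmax α O2 x * (ψ2 x) ^ 2) +
        δ * (1 - ∫ x, ψ1 x * ψ2 x)}

/-- `λ_H(δ,…)` extended to `δ = 0` by `λ₁(α,μ)`. -/
def lamFull {n : ℕ} (H : ℕ) (δ α μ rmax : ℝ) (O : Fin H → Rn n) : ℝ :=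
  if δ = 0 then lambda1 n α μ rmax else lambdaH H δ α μ rmax O

/-- The Laplacian, as the trace of the second derivative. -/
def lap {n : ℕ} (f : Rn n → ℝ) (x : Rn n) : ℝ :=
  ∑ i : Fin n, fderiv ℝ (fun y => fderiv ℝ f y (EuclideanSpace.single i (1 : ℝ))) x
    (EuclideanSpace.single i (1 : ℝ))

/-- A (classical) solution of the mutation–selection–migration system with initial datum `u0`:
continuity on `[0,∞) × ℝⁿ`, existence and continuity of `∂ₜ u` and of the spatial derivatives
up to order two on `(0,∞) × ℝⁿ`, and the equations. -/
structure IsSolution {n : ℕ} (H : ℕ) (μ δ rmax α : ℝ) (O : Fin H → Rn n)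
    (u0 : Fin H → Rn n → ℝ) (u : Fin H → ℝ → Rn n → ℝ) : Prop where
  init : ∀ i x, u i 0 x = u0 i x
  cont : ∀ i, ContinuousOn (fun p : ℝ × Rn n => u i p.1 p.2)
    (Set.Ici (0:ℝ) ×ˢ (Set.univ : Set (Rn n)))
  contDiff_x : ∀ i, ∀ t > (0:ℝ), ContDiff ℝ 2 (u i t)
  diff_t : ∀ i x, ∀ t > (0:ℝ), DifferentiableAt ℝ (fun s => u i s x) t
  cont_dt : ∀ i, ContinuousOn (fun p : ℝ × Rn n => deriv (fun s => u i s p.2) p.1)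
    (Set.Ioi (0:ℝ) ×ˢ (Set.univ : Set (Rn n)))
  cont_dx : ∀ i, ContinuousOn (fun p : ℝ × Rn n => fderiv ℝ (u i p.1) p.2)
    (Set.Ioi (0:ℝ) ×ˢ (Set.univ : Set (Rn n)))
  cont_dxx : ∀ i, ContinuousOn
    (fun p : ℝ × Rn n => fderiv ℝ (fun y => fderiv ℝ (u i p.1) y) p.2)
    (Set.Ioi (0:ℝ) ×ˢ (Set.univ : Set (Rn n)))
  pde : ∀ i x, ∀ t > (0:ℝ),
    deriv (fun s => u i s x) t =
      μ ^ 2 / 2 * lap (u i t) x +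
      u i t x * (fitness rmax α (O i) x - ∫ y, u i t y) +
      δ * ((1 / ((H : ℝ) - 1)) * (∑ k ∈ Finset.univ.erase i, u k t x) - u i t x)

/-- Pointwise exponential bound `0 ≤ uᵢ(t,x) ≤ K e^{(r_max+1)t - c‖x‖}` for `t ≥ 0`. -/
def ExpBound {n H : ℕ} (K c rmax : ℝ) (u : Fin H → ℝ → Rn n → ℝ) : Prop :=
  ∀ i t x, 0 ≤ t → 0 ≤ u i t x ∧ u i t x ≤ K * Real.exp ((rmax + 1) * t - c * ‖x‖)

/-- The population sizes `t ↦ ∫ uᵢ(t,·)` are locally Lipschitz continuous on `[0,∞)`. -/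
def LocLipMass {n H : ℕ} (u : Fin H → ℝ → Rn n → ℝ) : Prop :=
  ∀ i, ∀ b : ℝ, ∃ L : NNReal, LipschitzOnWith L (fun t => ∫ x, u i t x) (Set.Icc 0 b)


/-!
The average of quadratic fitnesses with a common `α` is again a quadratic fitness: its optimum is
the barycentre `Ō` of the optima and its maximum is `r_max - (α/2)·(1/H)∑‖Oᵢ - Ō‖²`. The principal
eigenvalue is invariant under translations and decreases by `c` when `c` is added to the fitness,
so no eigenfunction has to be computed: comparing `λ₃` with `λ₂` amounts to comparing the spreads
of the optima, `2β²/3 + 2‖O₃‖²/9 < β²`, i.e. `‖O₃‖² < 3β²/2`.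
-/

section

variable {n : ℕ}

theorem gradient_comp_add_right (ψ : Rn n → ℝ) (a x : Rn n) :
    gradient (fun y => ψ (y + a)) x = gradient ψ (x + a) := by
  simp only [gradient, fderiv_comp_add_right]

theorem memE.comp_add_right {ψ : Rn n → ℝ} (hψ : memE ψ) (a : Rn n) :
    memE (fun x => ψ (x + a)) := by
  obtain ⟨hsq, hgrad, hweight⟩ := hψ
  refine ⟨hsq.comp_add_right a, ?_, ?_⟩
  · simpa only [gradient_comp_add_right] using hgrad.comp_add_right a
  · have hbound : Integrable (fun x : Rn n =>
        2 * (‖x + a‖ ^ 2 * ψ (x + a) ^ 2) + 2 * ‖a‖ ^ 2 * ψ (x + a) ^ 2) :=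
      ((hweight.comp_add_right a).const_mul 2).add ((hsq.comp_add_right a).const_mul _)
    refine hbound.mono' ((continuous_norm.pow 2).aestronglyMeasurable.mul
      (hsq.comp_add_right a).aestronglyMeasurable) (Eventually.of_forall fun x => ?_)
    have hx : ‖x‖ ^ 2 ≤ 2 * (‖x + a‖ ^ 2 + ‖a‖ ^ 2) := by
      calc ‖x‖ ^ 2 ≤ (‖x + a‖ + ‖a‖) ^ 2 := by
            gcongr; simpa using norm_sub_le (x + a) a
        _ ≤ 2 * (‖x + a‖ ^ 2 + ‖a‖ ^ 2) := add_sq_le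
    rw [Real.norm_of_nonneg (by positivity)]
    nlinarith [mul_le_mul_of_nonneg_right hx (sq_nonneg (ψ (x + a)))]

theorem norm_gradient_eq_norm_fderiv (ψ : Rn n → ℝ) (x : Rn n) :
    ‖gradient ψ x‖ = ‖fderiv ℝ ψ x‖ := by
  simp only [gradient, LinearIsometryEquiv.norm_map]

theorem memE_of_contDiff_of_hasCompactSupport {ψ : Rn n → ℝ} (hψ : ContDiff ℝ 1 ψ)
    (hsupp : HasCompactSupport ψ) : memE ψ := by
  have hcont : Continuous ψ := hψ.continuous
  have hcont' : Continuous (fderiv ℝ ψ) := hψ.continuous_fderiv one_ne_zero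
  have hsq : HasCompactSupport (fun x => ψ x ^ 2) := hsupp.comp_left (g := fun t => t ^ 2) (by simp)
  have hgrad : HasCompactSupport (fun x => ‖fderiv ℝ ψ x‖ ^ 2) :=
    (hsupp.fderiv ℝ).norm.comp_left (g := fun t => t ^ 2) (by simp)
  have hweight : HasCompactSupport (fun x : Rn n => ‖x‖ ^ 2 * ψ x ^ 2) := hsq.mul_left
  refine ⟨?_, ?_, ?_⟩
  · exact Continuous.integrable_of_hasCompactSupport (by fun_prop) hsq
  · simp only [norm_gradient_eq_norm_fderiv]
    exact Continuous.integrable_of_hasCompactSupport (by fun_prop) hgrad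
  · exact Continuous.integrable_of_hasCompactSupport (by fun_prop) hweight

theorem exists_memE_integral_sq_eq_one : ∃ ψ : Rn n → ℝ, memE ψ ∧ (∫ x, ψ x ^ 2) = 1 := by
  let b : ContDiffBump (0 : Rn n) := ⟨1, 2, one_pos, one_lt_two⟩
  have hb : memE b := memE_of_contDiff_of_hasCompactSupport b.contDiff b.hasCompactSupport
  have hI : 0 < ∫ x, b x ^ 2 := by
    rw [integral_pos_iff_support_of_nonneg (fun x => sq_nonneg _) hb.1]
    have hsupp : Function.support (fun x => b x ^ 2) = Metric.ball 0 b.rOut := by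
      rw [← b.support_eq]
      ext x
      simp [Function.mem_support]
    rw [hsupp]
    exact Metric.measure_ball_pos _ _ b.rOut_pos
  refine ⟨fun x => (√(∫ x, b x ^ 2))⁻¹ * b x,
    memE_of_contDiff_of_hasCompactSupport (contDiff_const.mul b.contDiff)
      (b.hasCompactSupport.mul_left), ?_⟩
  simp only [mul_pow, integral_const_mul, inv_pow, Real.sq_sqrt hI.le]
  exact inv_mul_cancel₀ hI.ne'

theorem Q1_comp_add_right (μ : ℝ) (r ψ : Rn n → ℝ) (a : Rn n) :
    Q1 μ (fun x => r (x + a)) (fun x => ψ (x + a)) = Q1 μ r ψ := by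
  simp only [Q1, gradient_comp_add_right]
  rw [integral_add_right_eq_self (fun x => ‖gradient ψ x‖ ^ 2) a,
    integral_add_right_eq_self (fun x => r x * ψ x ^ 2) a]

theorem Q1_add_const (μ c : ℝ) {r ψ : Rn n → ℝ} (hr : Integrable (fun x => r x * ψ x ^ 2))
    (hψ : memE ψ) (hnorm : (∫ x, ψ x ^ 2) = 1) :
    Q1 μ (fun x => r x + c) ψ = Q1 μ r ψ - c := by
  have hsplit : (fun x => (r x + c) * ψ x ^ 2) = fun x => r x * ψ x ^ 2 + c * ψ x ^ 2 := by
    funext x; ring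
  rw [Q1, Q1, hsplit, integral_add hr (hψ.1.const_mul c), integral_const_mul, hnorm]
  ring

def rayleighValues (μ : ℝ) (r : Rn n → ℝ) : Set ℝ :=
  {Q : ℝ | ∃ ψ : Rn n → ℝ, memE ψ ∧ (∫ x, (ψ x) ^ 2) = 1 ∧ Q = Q1 μ r ψ}

theorem lambdaSingle_eq_sInf (μ : ℝ) (r : Rn n → ℝ) :
    lambdaSingle μ r = sInf (rayleighValues μ r) := rfl

theorem rayleighValues_nonempty (μ : ℝ) (r : Rn n → ℝ) : (rayleighValues μ r).Nonempty :=
  let ⟨ψ, hψ, hnorm⟩ := exists_memE_integral_sq_eq_one (n := n)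
  ⟨_, ψ, hψ, hnorm, rfl⟩

theorem bddBelow_rayleighValues_of_nonpos (μ : ℝ) {r : Rn n → ℝ} (hr : ∀ x, r x ≤ 0) :
    BddBelow (rayleighValues μ r) := by
  refine ⟨0, ?_⟩
  rintro _ ⟨ψ, -, -, rfl⟩
  have hgrad : 0 ≤ ∫ x, ‖gradient ψ x‖ ^ 2 := integral_nonneg fun x => sq_nonneg _
  have hpot : (∫ x, r x * ψ x ^ 2) ≤ 0 :=
    integral_nonpos fun x => mul_nonpos_of_nonpos_of_nonneg (hr x) (sq_nonneg _)
  have hμ : 0 ≤ μ ^ 2 / 2 := by positivity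
  simp only [Q1]
  nlinarith

theorem rayleighValues_comp_add_right (μ : ℝ) (r : Rn n → ℝ) (a : Rn n) :
    rayleighValues μ (fun x => r (x + a)) = rayleighValues μ r := by
  have hsubset : ∀ (r : Rn n → ℝ) (a : Rn n),
      rayleighValues μ r ⊆ rayleighValues μ (fun x => r (x + a)) := by
    rintro r a _ ⟨ψ, hψ, hnorm, rfl⟩
    exact ⟨fun x => ψ (x + a), hψ.comp_add_right a,
      (integral_add_right_eq_self (fun x => ψ x ^ 2) a).trans hnorm,
      (Q1_comp_add_right μ r ψ a).symm⟩
  refine subset_antisymm ?_ (hsubset r a)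
  simpa using hsubset (fun x => r (x + a)) (-a)

theorem rayleighValues_add_const (μ c : ℝ) {r : Rn n → ℝ}
    (hr : ∀ ψ, memE ψ → Integrable (fun x => r x * ψ x ^ 2)) :
    rayleighValues μ (fun x => r x + c) = (· - c) '' rayleighValues μ r := by
  ext Q
  constructor
  · rintro ⟨ψ, hψ, hnorm, rfl⟩
    exact ⟨_, ⟨ψ, hψ, hnorm, rfl⟩, (Q1_add_const μ c (hr ψ hψ) hψ hnorm).symm⟩
  · rintro ⟨_, ⟨ψ, hψ, hnorm, rfl⟩, rfl⟩
    exact ⟨ψ, hψ, hnorm, (Q1_add_const μ c (hr ψ hψ) hψ hnorm).symm⟩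

theorem lambdaSingle_comp_add_right (μ : ℝ) (r : Rn n → ℝ) (a : Rn n) :
    lambdaSingle μ (fun x => r (x + a)) = lambdaSingle μ r := by
  rw [lambdaSingle_eq_sInf, lambdaSingle_eq_sInf, rayleighValues_comp_add_right]

theorem lambdaSingle_add_const (μ c : ℝ) {r : Rn n → ℝ}
    (hr : ∀ ψ, memE ψ → Integrable (fun x => r x * ψ x ^ 2))
    (hbdd : BddBelow (rayleighValues μ r)) :
    lambdaSingle μ (fun x => r x + c) = lambdaSingle μ r - c := by
  rw [lambdaSingle_eq_sInf, lambdaSingle_eq_sInf, rayleighValues_add_const μ c hr]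
  exact ((OrderIso.subRight c).map_csInf' (rayleighValues_nonempty μ r) hbdd).symm

theorem fitness_zero_zero (α : ℝ) (x : Rn n) : fitness 0 α 0 x = -(α / 2 * ‖x‖ ^ 2) := by
  simp [fitness]

theorem lambdaSingle_fitness (μ A : ℝ) {α : ℝ} (hα : 0 ≤ α) (m : Rn n) :
    lambdaSingle μ (fitness A α m) = lambdaSingle μ (fitness 0 α (0 : Rn n)) - A := by
  have hshift : fitness A α m = fun x => (fun y => fitness 0 α 0 y + A) (x + -m) := by
    funext x
    simp only [fitness, sub_zero, zero_sub, ← sub_eq_add_neg]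
    ring
  have hint : ∀ ψ : Rn n → ℝ, memE ψ → Integrable (fun x => fitness 0 α 0 x * ψ x ^ 2) :=
    fun ψ hψ => (hψ.2.2.const_mul (-(α / 2))).congr
      (Eventually.of_forall fun x => by simp only [fitness_zero_zero]; ring)
  have hnonpos : ∀ x : Rn n, fitness 0 α 0 x ≤ 0 := fun x => by
    rw [fitness_zero_zero, neg_nonpos]; positivity
  rw [hshift, lambdaSingle_comp_add_right μ (fun y => fitness 0 α 0 y + A) (-m),
    lambdaSingle_add_const μ A hint (bddBelow_rayleighValues_of_nonpos μ hnonpos)]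

theorem fitness_neg_add_fitness_div_two (c α : ℝ) (O : Rn n) :
    (fun x => (fitness c α (-O) x + fitness c α O x) / 2) =
      fitness (c - α / 2 * ‖O‖ ^ 2) α 0 := by
  funext x
  simp only [fitness, sub_neg_eq_add, sub_zero, norm_add_sq_real, norm_sub_sq_real]
  ring

theorem fitness_neg_add_fitness_add_fitness_div_three (c α : ℝ) (O P : Rn n) :
    (fun x => (fitness c α (-O) x + fitness c α O x + fitness c α P x) / 3) =
      fitness (c - α / 3 * ‖O‖ ^ 2 - α / 9 * ‖P‖ ^ 2) α ((3 : ℝ)⁻¹ • P) := by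
  funext x
  simp only [fitness, sub_neg_eq_add, norm_add_sq_real, norm_sub_sq_real, real_inner_smul_right,
    norm_smul, mul_pow, Real.norm_eq_abs, sq_abs]
  ring

end

theorem statement10_general (n : ℕ) (hn : 0 < n)
    (rmax α μ β : ℝ) (hα : 0 < α) (hβ : 0 < β)
    (O1 O2 : Rn n)
    (hO1 : O1 = EuclideanSpace.single ⟨0, hn⟩ (-β))
    (hO2 : O2 = EuclideanSpace.single ⟨0, hn⟩ β)
    (O3 : Rn n) :
    lambdaSingle μ (fun x =>
        (fitness rmax α O1 x + fitness rmax α O2 x + fitness rmax α O3 x) / 3) <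
      lambdaSingle μ (fun x => (fitness rmax α O1 x + fitness rmax α O2 x) / 2) ↔
    ‖O3‖ < Real.sqrt (3 / 2) * β := by
  obtain rfl : O1 = -O2 := by rw [hO1, hO2]; exact PiLp.single_neg 2 _
  have hnormO2 : ‖O2‖ = β := by rw [hO2, PiLp.norm_single, Real.norm_of_nonneg hβ.le]
  have hradius : ‖O3‖ ^ 2 < 3 / 2 * β ^ 2 ↔ ‖O3‖ < √(3 / 2) * β := by
    rw [← pow_lt_pow_iff_left₀ (norm_nonneg O3) (by positivity) two_ne_zero, mul_pow,
      Real.sq_sqrt (by norm_num)]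
  rw [fitness_neg_add_fitness_div_two, fitness_neg_add_fitness_add_fitness_div_three,
    lambdaSingle_fitness μ _ hα.le ((3 : ℝ)⁻¹ • O3),
    lambdaSingle_fitness μ (rmax - α / 2 * ‖O2‖ ^ 2) hα.le 0, sub_lt_sub_iff_left, hnormO2,
    ← hradius]
  constructor <;> intro h <;> nlinarith

/-- **region of higher persistence for large migration is a ball.** -/
theorem statement10 (n : ℕ) (hn : 0 < n)
    (rmax α μ β : ℝ) (hα : 0 < α) (hμ : 0 < μ) (hβ : 0 < β)
    (O1 O2 : Rn n)
    (hO1 : O1 = EuclideanSpace.single ⟨0, hn⟩ (-β))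
    (hO2 : O2 = EuclideanSpace.single ⟨0, hn⟩ β)
    (O3 : Rn n) :
    lambdaSingle μ (fun x =>
        (fitness rmax α O1 x + fitness rmax α O2 x + fitness rmax α O3 x) / 3) <
      lambdaSingle μ (fun x => (fitness rmax α O1 x + fitness rmax α O2 x) / 2) ↔
    ‖O3‖ < Real.sqrt (3 / 2) * β :=
  statement10_general n hn rmax α μ β hα hβ O1 O2 hO1 hO2 O3

end MigrationAdaptation
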